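/- arXiv:2111.15299 — 3 statements merged into one kernel-verified Lean document; each statement's English description precedes it below -/
import Mathlib

section
/- Let P : C^op → InfSL be an elementary doctrine with comprehensive diagonals. The functor ∇_P : C → Q_P sending f : X → Y to [f] : (X, δ_X) → (Y, δ_Y) is full and faithful and preserves binary products. -/
open CategoryTheory CategoryTheory.Limits Opposite

noncomputable section

universe w v u

namespace DoctrinePaper

variable {C : Type u} [Category.{v} C] [HasFiniteProducts C]

/-- The fiber of a primary doctrine `P : Cᵒᵖ ⥤ SemilatInfCat` over an object `A`. -/
abbrev Fib (P : Cᵒᵖ ⥤ SemilatInfCat.{w}) (A : C) : Type w :=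
  ↥(P.obj (op A))

/-- Reindexing along an arrow `f : A ⟶ B`. -/
def rmap (P : Cᵒᵖ ⥤ SemilatInfCat.{w}) {A B : C} (f : A ⟶ B) :
    Fib P B → Fib P A :=
  fun x => (P.map f.op) x

variable (P : Cᵒᵖ ⥤ SemilatInfCat.{w})

/-- An elementary doctrine: fibered equalities `δ A ∈ P (A ⨯ A)` such that
`E_e(α) = P⟨pr1,pr2⟩(α) ⊓ P⟨pr2,pr3⟩(δ A)` is left adjoint to reindexing along
`e = ⟨pr1,pr2,pr2⟩ : X ⨯ A ⟶ (X ⨯ A) ⨯ A`. -/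
structure IsElementary where
  δ : ∀ A : C, Fib P (A ⨯ A)
  adj :
    ∀ (X A : C) (α : Fib P (X ⨯ A)) (β : Fib P ((X ⨯ A) ⨯ A)),
      (rmap P (prod.fst : (X ⨯ A) ⨯ A ⟶ X ⨯ A) α ⊓
          rmap P (prod.lift (prod.fst ≫ prod.snd) prod.snd : (X ⨯ A) ⨯ A ⟶ A ⨯ A) (δ A) ≤ β)
        ↔ α ≤ rmap P (prod.lift (𝟙 (X ⨯ A)) prod.snd : X ⨯ A ⟶ (X ⨯ A) ⨯ A) β

/-- A `P`-equivalence relation over `A`. -/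
structure IsEqRel (hE : IsElementary P) {A : C} (ρ : Fib P (A ⨯ A)) : Prop where
  refl : hE.δ A ≤ ρ
  symm : ρ = rmap P (prod.lift prod.snd prod.fst : A ⨯ A ⟶ A ⨯ A) ρ
  trans :
    rmap P (prod.fst : (A ⨯ A) ⨯ A ⟶ A ⨯ A) ρ ⊓
        rmap P (prod.lift (prod.fst ≫ prod.snd) prod.snd : (A ⨯ A) ⨯ A ⟶ A ⨯ A) ρ ≤
      rmap P (prod.lift (prod.fst ≫ prod.fst) prod.snd : (A ⨯ A) ⨯ A ⟶ A ⨯ A) ρ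

/-- An elementary existential doctrine, together with the induced left adjoints
`∃_f` along all arrows, satisfying the adjunction law, Frobenius reciprocity, and
the Beck–Chevalley condition along pullbacks of projections. -/
structure IsExistential extends IsElementary P where
  E : ∀ {A B : C}, (A ⟶ B) → Fib P A → Fib P B
  adjE : ∀ {A B : C} (f : A ⟶ B) (α : Fib P A) (β : Fib P B),
    E f α ≤ β ↔ α ≤ rmap P f β
  frobenius : ∀ {A B : C} (f : A ⟶ B) (α : Fib P A) (β : Fib P B),
    E f (α ⊓ rmap P f β) = E f α ⊓ β
  beckChevalley : ∀ {B A A' : C} (f : A' ⟶ A) (β : Fib P (B ⨯ A)),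
    E (prod.snd : B ⨯ A' ⟶ A') (rmap P (prod.map (𝟙 B) f) β) =
      rmap P f (E (prod.snd : B ⨯ A ⟶ A) β)

/-- Descent data for a relation `ρ` over `A`. -/
def Des {A : C} (ρ : Fib P (A ⨯ A)) : Set (Fib P A) :=
  {α | rmap P (prod.fst : A ⨯ A ⟶ A) α ⊓ ρ ≤ rmap P (prod.snd : A ⨯ A ⟶ A) α}

/-- Comprehensive diagonals: `f = g` iff `⊤ = P⟨f,g⟩(δ)`. -/
def ComprehensiveDiagonals (hE : IsElementary P) : Prop :=
  ∀ {X A : C} (f g : X ⟶ A), f = g ↔ rmap P (prod.lift f g) (hE.δ A) = ⊤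

/-- (Weak) comprehension structure. -/
structure Comprehension where
  cObj : ∀ {A : C}, Fib P A → C
  cArr : ∀ {A : C} (α : Fib P A), cObj α ⟶ A
  cTop : ∀ {A : C} (α : Fib P A), rmap P (cArr α) α = ⊤
  cUniv : ∀ {A : C} (α : Fib P A) {Y : C} (f : Y ⟶ A),
    rmap P f α = ⊤ → ∃ k : Y ⟶ cObj α, k ≫ cArr α = f

/-- Full comprehension. -/
def Comprehension.Full (hC : Comprehension P) : Prop :=
  ∀ {A : C} (α β : Fib P A), α ≤ β ↔ rmap P (hC.cArr α) β = ⊤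

/-- Strong comprehension: comprehension arrows are monic. -/
def Comprehension.Strong (hC : Comprehension P) : Prop :=
  ∀ {A : C} (α : Fib P A), Mono (hC.cArr α)

/-- `P`-injective arrow. -/
def PInj (hE : IsElementary P) {X A : C} (f : X ⟶ A) : Prop :=
  rmap P (prod.map f f) (hE.δ A) = hE.δ X

/-- `P`-surjective arrow. -/
def PSurj (hEx : IsExistential P) {X A : C} (f : X ⟶ A) : Prop :=
  hEx.E f (⊤ : Fib P X) = ⊤

/-- The product relation `ρ ⊠ σ` on `(A ⨯ B) ⨯ (A ⨯ B)`. -/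
def boxprod {A B : C} (ρ : Fib P (A ⨯ A)) (σ : Fib P (B ⨯ B)) :
    Fib P ((A ⨯ B) ⨯ (A ⨯ B)) :=
  rmap P (prod.map prod.fst prod.fst) ρ ⊓ rmap P (prod.map prod.snd prod.snd) σ

/-- The hom condition of the elementary quotient completion: `f : A ⟶ B`
represents an arrow `(A,ρ) ⟶ (B,σ)` iff `ρ ≤ P(f×f)(σ)`. -/
def QHomC {A B : C} (ρ : Fib P (A ⨯ A)) (σ : Fib P (B ⨯ B)) (f : A ⟶ B) : Prop :=
  ρ ≤ rmap P (prod.map f f) σ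

/-- The equivalence on representatives: `f ∼ g` iff `⊤ = P⟨f,g⟩(σ)`. -/
def QEq {A B : C} (σ : Fib P (B ⨯ B)) (f g : A ⟶ B) : Prop :=
  rmap P (prod.lift f g) σ = ⊤

/-! Faithfulness is literally comprehensive diagonals, and fullness is trivial. Everything else
holds in any elementary doctrine and rests on the substitution rule
`P⟨a,h⟩γ ∧ P⟨h,k⟩δ ≤ P⟨a,k⟩γ`, which is the counit of the adjunction defining `δ` reindexed
along `⟨⟨a,h⟩,k⟩`. It gives `δ_X ≤ P(f×f)δ_A`, so every arrow is a morphism of `Q_P`, and,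
substituting in both components, `δ_X ⊠ δ_Y ≤ δ_{X×Y}`; hence `(X × Y, δ_{X×Y})` receives the
pairing of any two morphisms, unique up to `∼` by comprehensive diagonals again. -/

end DoctrinePaper

namespace DoctrinePaper

attribute [local simp] prod.lift_fst prod.lift_snd prod.lift_fst_assoc prod.lift_snd_assoc

theorem prod.lift_comp_fst_comp_snd {C : Type u} [Category.{v} C] {W X Y : C}
    [HasBinaryProduct X Y] (g : W ⟶ X ⨯ Y) : prod.lift (g ≫ prod.fst) (g ≫ prod.snd) = g := by
  ext <;> simp

section Reindexing

variable {C : Type u} [Category.{v} C] {P : Cᵒᵖ ⥤ SemilatInfCat.{w}}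

theorem rmap_rmap {A B D : C} (f : A ⟶ B) (g : B ⟶ D) (x : Fib P D) :
    rmap P f (rmap P g x) = rmap P (f ≫ g) x := by
  simp only [rmap, op_comp, P.map_comp]; rfl

theorem rmap_id {A : C} (x : Fib P A) : rmap P (𝟙 A) x = x := by
  simp only [rmap, op_id, P.map_id]; rfl

theorem rmap_mono {A B : C} (f : A ⟶ B) {x y : Fib P B} (h : x ≤ y) :
    rmap P f x ≤ rmap P f y :=
  OrderHomClass.mono (show InfTopHom _ _ from P.map f.op) h

theorem rmap_inf {A B : C} (f : A ⟶ B) (x y : Fib P B) :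
    rmap P f (x ⊓ y) = rmap P f x ⊓ rmap P f y :=
  map_inf (show InfTopHom _ _ from P.map f.op) x y

theorem rmap_top {A B : C} (f : A ⟶ B) : rmap P f (⊤ : Fib P B) = ⊤ :=
  map_top (show InfTopHom _ _ from P.map f.op)

end Reindexing

variable {C : Type u} [Category.{v} C] [HasFiniteProducts C] (P : Cᵒᵖ ⥤ SemilatInfCat.{w})

namespace IsElementary

variable {P} (hE : IsElementary P)

theorem rmap_lift_self_delta {Y A : C} (g : Y ⟶ A) :
    rmap P (prod.lift g g) (hE.δ A) = ⊤ := by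
  have unit := (hE.adj Y A ⊤ (rmap P (prod.lift (prod.fst ≫ prod.snd) prod.snd) (hE.δ A))).mp
    inf_le_right
  rw [rmap_rmap] at unit
  simpa [rmap_rmap, rmap_top] using rmap_mono (prod.lift (𝟙 Y) g) unit

theorem leibniz {Z W A : C} (a : Z ⟶ W) (h k : Z ⟶ A) (γ : Fib P (W ⨯ A)) :
    rmap P (prod.lift a h) γ ⊓ rmap P (prod.lift h k) (hE.δ A) ≤ rmap P (prod.lift a k) γ := by
  have counit := (hE.adj W A γ (rmap P (prod.lift (prod.fst ≫ prod.fst) prod.snd) γ)).mpr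
    (by simp [rmap_rmap, rmap_id])
  simpa [rmap_rmap, rmap_inf] using rmap_mono (prod.lift (prod.lift a h) k) counit

theorem qHomC_delta {X A : C} (f : X ⟶ A) : QHomC P (hE.δ X) (hE.δ A) f := by
  have h := hE.leibniz (prod.fst ≫ f) prod.fst prod.snd (rmap P (prod.map (𝟙 A) f) (hE.δ A))
  simp only [rmap_rmap, prod.lift_map, Category.comp_id, prod.lift_fst_comp_snd_comp,
    prod.lift_fst_snd, rmap_id] at h
  rwa [hE.rmap_lift_self_delta, top_inf_eq] at h

theorem leibniz_prod {Z W X Y : C} (a : Z ⟶ W) (h₁ k₁ : Z ⟶ X) (h₂ k₂ : Z ⟶ Y)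
    (γ : Fib P (W ⨯ (X ⨯ Y))) :
    rmap P (prod.lift a (prod.lift h₁ h₂)) γ ⊓ rmap P (prod.lift h₁ k₁) (hE.δ X) ⊓
        rmap P (prod.lift h₂ k₂) (hE.δ Y) ≤ rmap P (prod.lift a (prod.lift k₁ k₂)) γ := by
  have first := hE.leibniz (prod.lift a h₂) h₁ k₁
    (rmap P (prod.lift (prod.fst ≫ prod.fst) (prod.lift prod.snd (prod.fst ≫ prod.snd))) γ)
  have second := hE.leibniz (prod.lift a k₁) h₂ k₂
    (rmap P (prod.lift (prod.fst ≫ prod.fst) (prod.lift (prod.fst ≫ prod.snd) prod.snd)) γ)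
  simp only [rmap_rmap, prod.comp_lift, prod.lift_fst_assoc, prod.lift_fst, prod.lift_snd]
    at first second
  exact le_trans (inf_le_inf_right _ first) second

theorem boxprod_delta_le (X Y : C) : boxprod P (hE.δ X) (hE.δ Y) ≤ hE.δ (X ⨯ Y) := by
  have h := hE.leibniz_prod prod.fst (prod.fst ≫ prod.fst) (prod.snd ≫ prod.fst)
    (prod.fst ≫ prod.snd) (prod.snd ≫ prod.snd) (hE.δ (X ⨯ Y))
  simp only [prod.lift_fst_comp_snd_comp, prod.lift_comp_fst_comp_snd, prod.lift_fst_snd,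
    rmap_id] at h
  rwa [hE.rmap_lift_self_delta, top_inf_eq] at h

end IsElementary

section QuotientArrows

variable {P}

theorem QHomC.of_le {A B : C} {ρ : Fib P (A ⨯ A)} {σ σ' : Fib P (B ⨯ B)} {f : A ⟶ B}
    (hf : QHomC P ρ σ f) (hσ : σ ≤ σ') : QHomC P ρ σ' f :=
  le_trans hf (rmap_mono _ hσ)

theorem QHomC.prodLift {T X Y : C} {τ : Fib P (T ⨯ T)} {ρ : Fib P (X ⨯ X)} {σ : Fib P (Y ⨯ Y)}
    {h : T ⟶ X} {k : T ⟶ Y} (hh : QHomC P τ ρ h) (hk : QHomC P τ σ k) :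
    QHomC P τ (boxprod P ρ σ) (prod.lift h k) := by
  rw [QHomC, boxprod, rmap_inf, rmap_rmap, rmap_rmap, prod.map_map, prod.map_map, prod.lift_fst,
    prod.lift_snd]
  exact le_inf hh hk

theorem ComprehensiveDiagonals.qEq_delta_iff {hE : IsElementary P}
    (hcd : ComprehensiveDiagonals P hE) {X A : C} {f g : X ⟶ A} :
    QEq P (hE.δ A) f g ↔ f = g :=
  (hcd f g).symm

end QuotientArrows

/-- For an elementary doctrine with comprehensive diagonals,
the functor `∇_P : C ⥤ Q_P`, `f ↦ [f] : (X,δ_X) ⟶ (Y,δ_Y)`, is well defined,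
full and faithful, and preserves binary products. -/
theorem nabla_fully_faithful_preserves_products
    (hE : IsElementary P) (hcd : ComprehensiveDiagonals P hE) :
    (∀ {X Y : C} (f : X ⟶ Y), QHomC P (hE.δ X) (hE.δ Y) f) ∧
    (∀ {X Y : C} (f g : X ⟶ Y), QEq P (hE.δ Y) f g → f = g) ∧
    (∀ {X Y : C} (g : X ⟶ Y), QHomC P (hE.δ X) (hE.δ Y) g →
      ∃ f : X ⟶ Y, QEq P (hE.δ Y) f g) ∧
    (∀ X Y : C,
      QHomC P (hE.δ (X ⨯ Y)) (hE.δ X) prod.fst ∧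
      QHomC P (hE.δ (X ⨯ Y)) (hE.δ Y) prod.snd ∧
      ∀ {T : C} (τ : Fib P (T ⨯ T)), IsEqRel P hE τ →
        ∀ (h : T ⟶ X) (k : T ⟶ Y), QHomC P τ (hE.δ X) h → QHomC P τ (hE.δ Y) k →
          ∃ m : T ⟶ X ⨯ Y, QHomC P τ (hE.δ (X ⨯ Y)) m ∧
            QEq P (hE.δ X) (m ≫ prod.fst) h ∧ QEq P (hE.δ Y) (m ≫ prod.snd) k ∧
            ∀ m' : T ⟶ X ⨯ Y, QHomC P τ (hE.δ (X ⨯ Y)) m' →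
              QEq P (hE.δ X) (m' ≫ prod.fst) h → QEq P (hE.δ Y) (m' ≫ prod.snd) k →
                QEq P (hE.δ (X ⨯ Y)) m m') := by
  refine ⟨hE.qHomC_delta, fun _ _ => hcd.qEq_delta_iff.mp,
    fun g _ => ⟨g, hcd.qEq_delta_iff.mpr rfl⟩, fun X Y => ⟨hE.qHomC_delta _, hE.qHomC_delta _, ?_⟩⟩
  intro T τ _ h k hh hk
  refine ⟨prod.lift h k, (hh.prodLift hk).of_le (hE.boxprod_delta_le X Y),
    hcd.qEq_delta_iff.mpr (prod.lift_fst h k), hcd.qEq_delta_iff.mpr (prod.lift_snd h k), ?_⟩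
  intro m' _ hfst hsnd
  rw [hcd.qEq_delta_iff] at hfst hsnd ⊢
  ext <;> simp [hfst, hsnd]

end DoctrinePaper
end
end

section
/- Let P : C^op → InfSL be a variational first order doctrine whose base C has distributive binary coproducts. Then the canonical coproduct injections i_A : A → A+B and i_B : B → A+B are P-injective, i.e. P(i_A × i_A)(δ_{A+B}) = δ_A and P(i_B × i_B)(δ_{A+B}) = δ_B. -/
open CategoryTheory CategoryTheory.Limits Opposite

noncomputable section

universe w v u

namespace DoctrinePaper

variable {C : Type u} [Category.{v} C] [HasFiniteProducts C]

variable (P : Cᵒᵖ ⥤ SemilatInfCat.{w})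

/-- A topology on a primary doctrine: a natural family of extensive, idempotent
inf-top-preserving maps commuting with reindexing. -/
structure DocTopology where
  j : ∀ {A : C}, Fib P A → Fib P A
  map_inf : ∀ {A : C} (α β : Fib P A), j (α ⊓ β) = j α ⊓ j β
  map_top : ∀ {A : C}, j (⊤ : Fib P A) = ⊤
  natural : ∀ {A B : C} (f : A ⟶ B) (β : Fib P B), rmap P f (j β) = j (rmap P f β)
  le_j : ∀ {A : C} (α : Fib P A), α ≤ j α
  idem : ∀ {A : C} (α : Fib P A), j (j α) = j α

/-- An implicational doctrine: each fiber has Heyting implication. -/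
structure IsImplicational where
  imp : ∀ {A : C}, Fib P A → Fib P A → Fib P A
  adj : ∀ {A : C} (α β γ : Fib P A), γ ≤ imp α β ↔ γ ⊓ α ≤ β

/-- A universal doctrine: right adjoints to reindexing along projections,
satisfying the Beck–Chevalley condition. -/
structure IsUniversal where
  all : ∀ {B A : C}, Fib P (B ⨯ A) → Fib P A
  adj : ∀ {B A : C} (γ : Fib P (B ⨯ A)) (β : Fib P A),
    rmap P (prod.snd : B ⨯ A ⟶ A) β ≤ γ ↔ β ≤ all γ
  beckChevalley : ∀ {B A A' : C} (f : A' ⟶ A) (γ : Fib P (B ⨯ A)),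
    rmap P f (all γ) = all (rmap P (prod.map (𝟙 B) f) γ)

/-- A disjunctive doctrine: each fiber has finite distributive joins, preserved
by reindexing. -/
structure IsDisjunctive where
  bot : ∀ {A : C}, Fib P A
  sup : ∀ {A : C}, Fib P A → Fib P A → Fib P A
  bot_le : ∀ {A : C} (α : Fib P A), bot ≤ α
  le_sup_left : ∀ {A : C} (α β : Fib P A), α ≤ sup α β
  le_sup_right : ∀ {A : C} (α β : Fib P A), β ≤ sup α β
  sup_le : ∀ {A : C} (α β γ : Fib P A), α ≤ γ → β ≤ γ → sup α β ≤ γ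
  inf_sup_distrib : ∀ {A : C} (α β γ : Fib P A), α ⊓ sup β γ = sup (α ⊓ β) (α ⊓ γ)
  map_bot : ∀ {A B : C} (f : A ⟶ B), rmap P f bot = bot
  map_sup : ∀ {A B : C} (f : A ⟶ B) (β γ : Fib P B),
    rmap P f (sup β γ) = sup (rmap P f β) (rmap P f γ)

lemma rmap_comp {X Y Z : C} (f : X ⟶ Y) (g : Y ⟶ Z) (x : Fib P Z) :
    rmap P (f ≫ g) x = rmap P f (rmap P g x) := by
  simp only [rmap, op_comp, P.map_comp]
  rfl

variable {P}

lemma rmap_δ_eq_top_iff {hE : IsElementary P} (hcd : ComprehensiveDiagonals P hE) {Y X : C}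
    (h : Y ⟶ X ⨯ X) : rmap P h (hE.δ X) = ⊤ ↔ h ≫ prod.fst = h ≫ prod.snd := by
  rw [hcd, ← prod.comp_lift, prod.lift_fst_snd, Category.comp_id]

/-- Full comprehension reduces `≤` between predicates to equations between arrows, where
`Mono f` cancels `f`. -/
theorem pInj_of_mono {hE : IsElementary P} (hC : Comprehension P) (hfull : hC.Full P)
    (hcd : ComprehensiveDiagonals P hE) {X A : C} (f : X ⟶ A) [Mono f] : PInj P hE f := by
  have hmap : ∀ {Y : C} (h : Y ⟶ X ⨯ X),
      rmap P h (rmap P (prod.map f f) (hE.δ A)) = ⊤ ↔ rmap P h (hE.δ X) = ⊤ := by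
    intro Y h
    rw [← rmap_comp, rmap_δ_eq_top_iff hcd, rmap_δ_eq_top_iff hcd, Category.assoc,
      Category.assoc, prod.map_fst, prod.map_snd, ← Category.assoc, ← Category.assoc,
      cancel_mono]
  apply le_antisymm
  · rw [hfull, ← hmap]
    exact hC.cTop _
  · rw [hfull, hmap]
    exact hC.cTop _

lemma mono_coprod_inl_of_isIso_distrib {A B : C} [HasBinaryCoproduct A B]
    [HasBinaryCoproduct (A ⨯ A) (A ⨯ B)]
    [IsIso (coprod.desc (prod.map (𝟙 A) coprod.inl) (prod.map (𝟙 A) coprod.inr) :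
      (A ⨯ A) ⨿ (A ⨯ B) ⟶ A ⨯ (A ⨿ B))] :
    Mono (coprod.inl : A ⟶ A ⨿ B) := by
  set φ : (A ⨯ A) ⨿ (A ⨯ B) ⟶ A ⨯ (A ⨿ B) :=
    coprod.desc (prod.map (𝟙 A) coprod.inl) (prod.map (𝟙 A) coprod.inr)
  -- `A ⨯ inl` has the retraction `r`, which is `snd` on `A ⨯ A` and `fst` on `A ⨯ B`.
  let r : A ⨯ (A ⨿ B) ⟶ A := inv φ ≫ coprod.desc prod.snd prod.fst
  have hr : prod.map (𝟙 A) coprod.inl ≫ r = prod.snd := by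
    rw [← coprod.inl_desc (prod.map (𝟙 A) coprod.inl) (prod.map (𝟙 A) coprod.inr),
      Category.assoc, IsIso.hom_inv_id_assoc, coprod.inl_desc]
  refine ⟨fun {K} u v h => ?_⟩
  calc u = prod.lift u u ≫ prod.map (𝟙 A) coprod.inl ≫ r := by rw [hr, prod.lift_snd]
    _ = prod.lift u v ≫ prod.map (𝟙 A) coprod.inl ≫ r := by
      simp only [prod.lift_map_assoc, h]
    _ = v := by rw [hr, prod.lift_snd]

lemma mono_coprod_inr_of_isIso_distrib [HasBinaryCoproducts C] {A B : C}
    [IsIso (coprod.desc (prod.map (𝟙 B) coprod.inl) (prod.map (𝟙 B) coprod.inr) :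
      (B ⨯ B) ⨿ (B ⨯ A) ⟶ B ⨯ (B ⨿ A))] :
    Mono (coprod.inr : B ⟶ A ⨿ B) := by
  have : Mono (coprod.inl : B ⟶ B ⨿ A) := mono_coprod_inl_of_isIso_distrib
  rw [← coprod.inl_desc (coprod.inr : B ⟶ A ⨿ B) coprod.inl]
  exact mono_comp _ (coprod.braiding B A).hom

variable (P)

theorem coproduct_injections_PInj
    [HasBinaryCoproducts C]
    (hdistrib : ∀ A B D : C,
      IsIso (coprod.desc (prod.map (𝟙 A) coprod.inl) (prod.map (𝟙 A) coprod.inr) :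
        (A ⨯ B) ⨿ (A ⨯ D) ⟶ A ⨯ (B ⨿ D)))
    (hP : IsExistential P)
    (hC : Comprehension P) (hfull : hC.Full P)
    (hcd : ComprehensiveDiagonals P hP.toIsElementary)
    (A B : C) :
    PInj P hP.toIsElementary (coprod.inl : A ⟶ A ⨿ B) ∧
      PInj P hP.toIsElementary (coprod.inr : B ⟶ A ⨿ B) := by
  have := hdistrib A A B
  have := hdistrib B B A
  have : Mono (coprod.inl : A ⟶ A ⨿ B) := mono_coprod_inl_of_isIso_distrib
  have : Mono (coprod.inr : B ⟶ A ⨿ B) := mono_coprod_inr_of_isIso_distrib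
  exact ⟨pInj_of_mono hC hfull hcd _, pInj_of_mono hC hfull hcd _⟩

end DoctrinePaper
end
end

section
/- Let P : C^op → InfSL be an m-variational existential doctrine with a strong predicate classifier (Ω, ∈). Then the domain T of the comprehension arrow {∈} : T → Ω is a terminal object of C. -/
open CategoryTheory CategoryTheory.Limits Opposite

noncomputable section

universe w v u

namespace DoctrinePaper

variable {C : Type u} [Category.{v} C] [HasFiniteProducts C]

variable (P : Cᵒᵖ ⥤ SemilatInfCat.{w})

/-- A strong predicate classifier: an object `Ω` with `∈ ∈ P(Ω)` such that every
predicate has a unique classifying arrow. -/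
structure StrongPredClassifier where
  Ω : C
  mem : Fib P Ω
  χ : ∀ {A : C}, Fib P A → (A ⟶ Ω)
  χ_spec : ∀ {A : C} (φ : Fib P A), rmap P (χ φ) mem = φ
  χ_unique : ∀ {A : C} (φ : Fib P A) (g : A ⟶ Ω), rmap P g mem = φ → g = χ φ

/-- In an m-variational existential doctrine with a strong
predicate classifier `(Ω, ∈)`, the domain of the comprehension arrow
`{∈} : T ⟶ Ω` is a terminal object of the base. -/
theorem comprehension_of_mem_terminal
    (hP : IsExistential P) (hC : Comprehension P)
    (hfull : hC.Full P) (hstrong : hC.Strong P)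
    (hcd : ComprehensiveDiagonals P hP.toIsElementary)
    (S : StrongPredClassifier P) :
    Nonempty (IsTerminal (hC.cObj S.mem)) := by
  classical
  have rmap_top : ∀ {A B : C} (f : A ⟶ B), rmap P f (⊤ : Fib P B) = ⊤ := by
    intro A B f
    exact (P.map f.op).map_top'
  have rmap_comp : ∀ {A B D : C} (f : A ⟶ B) (g : B ⟶ D) (x : Fib P D),
      rmap P (f ≫ g) x = rmap P f (rmap P g x) := by
    intro A B D f g x
    show (P.map (f ≫ g).op) x = (P.map f.op) ((P.map g.op) x)
    rw [op_comp, P.map_comp]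
    rfl
  have key : ∀ {Y : C} (k : Y ⟶ hC.cObj S.mem),
      k ≫ hC.cArr S.mem = S.χ (⊤ : Fib P Y) := by
    intro Y k
    apply S.χ_unique
    rw [rmap_comp, hC.cTop, rmap_top]
  refine ⟨IsTerminal.ofUniqueHom (fun Y => ?_) (fun Y m => ?_)⟩
  · have h : rmap P (S.χ (⊤ : Fib P Y)) S.mem = ⊤ := S.χ_spec _
    exact (hC.cUniv S.mem (S.χ ⊤) h).choose
  · have hm := hstrong S.mem
    have h1 := key m
    have h2 := key ((hC.cUniv S.mem (S.χ (⊤ : Fib P Y)) (S.χ_spec _)).choose)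
    exact hm.right_cancellation _ _ (h1.trans h2.symm)

end DoctrinePaper
end
end
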